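/- arXiv:1810.07569 — 2 statements merged into one kernel-verified Lean document; each statement's English description precedes it below -/
import Mathlib

section
/- Fix Θ ∈ (0,π]. Let θ ∈ [0,π), ψ ∈ [0,π), φ ∈ [0,4π). Then R(θ,ψ,φ) ∈ 𝒢_ξ·𝒢_ξ (i.e., it is a product of two rotations with axes in the x–z plane making angle at most Θ with ẑ) if and only if at least one of the following holds: (i) φ = 0 or φ = 2π; (ii) θ = 0; (iii) (sin ψ · cos(φ/2) + cos ψ · sin(φ/2) · cos θ)/(sin(φ/2) · sin θ) ≥ cot Θ or (−sin ψ · cos(φ/2) + cos ψ · sin(φ/2) · cos θ)/(sin(φ/2) · sin θ) ≥ cot Θ; (iv) Θ = π. -/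
open Real

/-- The SU(2) rotation by angle φ about the axis (sin θ cos ψ, sin θ sin ψ, cos θ). -/
noncomputable def Rot (θ ψ φ : ℝ) : Matrix (Fin 2) (Fin 2) ℂ :=
  !![(Real.cos (φ/2) : ℂ) - Complex.I * (Real.sin (φ/2) : ℂ) * (Real.cos θ : ℂ),
     -Complex.I * (Real.sin (φ/2) : ℂ) * (Real.sin θ : ℂ) * Complex.exp (-(Complex.I * (ψ : ℂ)));
     -Complex.I * (Real.sin (φ/2) : ℂ) * (Real.sin θ : ℂ) * Complex.exp (Complex.I * (ψ : ℂ)),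
     (Real.cos (φ/2) : ℂ) + Complex.I * (Real.sin (φ/2) : ℂ) * (Real.cos θ : ℂ)]

/-- Product of two sets of matrices. -/
def setMul (G₁ G₂ : Set (Matrix (Fin 2) (Fin 2) ℂ)) : Set (Matrix (Fin 2) (Fin 2) ℂ) :=
  {C | ∃ A ∈ G₁, ∃ B ∈ G₂, C = A * B}

/-- Rotations with axis in the x-z plane making angle at most Θ with ẑ. -/
noncomputable def Gxi (Θ : ℝ) : Set (Matrix (Fin 2) (Fin 2) ℂ) :=
  {M | ∃ θ φ : ℝ, θ ∈ Set.Icc 0 Θ ∧ φ ∈ Set.Ico 0 (4*π) ∧ M = Rot θ 0 φ}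

/-!
Identify SU(2) with the unit quaternions `w + x i + y j + z k` and put
`E(q) = sin Θ (x z + w y) - cos Θ (x² + y²)`. Then `𝒢_ξ` consists of the unit quaternions
`p = a + b i + c k` with `E(p) ≥ 0`, and `q = p p'` forces `p' = p̄ q`, whose `j`-part
`a y + b z - c x` has to vanish. Reversing the order of the two factors flips the sign of `y`.

Sufficiency: `p ∝ (x cos Θ - z sin Θ) + y sin Θ i + y cos Θ k` lies on the boundary of the cone,
`p̄ q` has no `j`-part, and `E(p̄ q) = E(q)`.

Necessity: with `t = b cos Θ - c sin Θ`, both `y sin Θ · b'` and `y sin Θ · (b' cos Θ - c' sin Θ)`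
are linear in `(b, t)`. Their product gives `(E₊ b + m t) (n b + E₋ t) = E(p') (y sin Θ)² ≥ 0`,
where `E₊`, `E₋` are the values of `E` at `q` and at `q` with `y ↦ -y`, and `m, n > 0`. Since
`E(p) = -b t ≥ 0`, if `E₊` and `E₋` were both negative then `b = t = 0`. So `p = ±1`, and then
`E₊ = E(p') ≥ 0`, a contradiction.
-/

open Quaternion
open scoped Pointwise

-- `w - i (x σₓ + y σ_y + z σ_z)`, the Pauli-matrix model of `w + x i + y j + z k`.
noncomputable def quatMat : ℍ[ℝ] →* Matrix (Fin 2) (Fin 2) ℂ where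
  toFun q := !![(q.re : ℂ) - Complex.I * q.imK, -(q.imJ : ℂ) - Complex.I * q.imI;
    (q.imJ : ℂ) - Complex.I * q.imI, (q.re : ℂ) + Complex.I * q.imK]
  map_one' := by ext i j; fin_cases i <;> fin_cases j <;> simp
  map_mul' p q := by
    rw [Matrix.mul_fin_two]
    ext i j
    fin_cases i <;> fin_cases j <;>
      simp [Complex.ext_iff, re_mul, imI_mul, imJ_mul, imK_mul] <;> constructor <;> ring

lemma quatMat_injective : Function.Injective quatMat := by
  intro p q h
  have h₀₀ := congrFun (congrFun h 0) 0
  have h₀₁ := congrFun (congrFun h 0) 1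
  simp [quatMat, Complex.ext_iff] at h₀₀ h₀₁
  ext <;> linarith

noncomputable def rotQuat (θ ψ φ : ℝ) : ℍ[ℝ] :=
  ⟨cos (φ/2), sin (φ/2) * sin θ * cos ψ, sin (φ/2) * sin θ * sin ψ, sin (φ/2) * cos θ⟩

lemma Rot_eq_quatMat (θ ψ φ : ℝ) : Rot θ ψ φ = quatMat (rotQuat θ ψ φ) := by
  have hexp : Complex.exp (Complex.I * ψ) = cos ψ + sin ψ * Complex.I := by
    rw [mul_comm, Complex.exp_mul_I, ← Complex.ofReal_cos, ← Complex.ofReal_sin]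
  have hexp_neg : Complex.exp (-(Complex.I * ψ)) = cos ψ - sin ψ * Complex.I := by
    rw [← mul_neg, mul_comm, ← Complex.ofReal_neg, Complex.exp_mul_I, ← Complex.ofReal_cos,
      ← Complex.ofReal_sin, cos_neg, sin_neg]
    push_cast; ring
  ext i j
  fin_cases i <;> fin_cases j <;> simp [Rot, quatMat, rotQuat, hexp, hexp_neg] <;>
    ring_nf <;> simp only [Complex.I_sq] <;> ring

lemma normSq_rotQuat (θ ψ φ : ℝ) : normSq (rotQuat θ ψ φ) = 1 := by
  rw [normSq_def']
  simp only [rotQuat]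
  linear_combination (sin (φ/2) ^ 2 * sin θ ^ 2) * sin_sq_add_cos_sq ψ +
    sin (φ/2) ^ 2 * sin_sq_add_cos_sq θ + sin_sq_add_cos_sq (φ/2)

-- For `q.imJ = 0` this is `-b (b cos Θ - c sin Θ)` with `(b, c) = (q.imI, q.imK)`, nonnegative iff
-- the axis `(b, c)` makes an angle at most `Θ` with `±ẑ` (for `0 < Θ ≤ π`).
noncomputable def coneMargin (Θ : ℝ) (q : ℍ[ℝ]) : ℝ :=
  sin Θ * (q.imI * q.imK + q.re * q.imJ) - cos Θ * (q.imI ^ 2 + q.imJ ^ 2)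

def xzCone (Θ : ℝ) : Set ℍ[ℝ] :=
  {p | p.imJ = 0 ∧ normSq p = 1 ∧ 0 ≤ coneMargin Θ p}

lemma exists_polar_angle_mem_Icc_of_nonneg {Θ b c : ℝ} (hΘ : 0 < Θ) (hb : 0 ≤ b)
    (hbc : b * cos Θ - c * sin Θ ≤ 0) :
    ∃ r θ, θ ∈ Set.Icc 0 Θ ∧ b = r * sin θ ∧ c = r * cos θ := by
  set z : ℂ := ⟨c, b⟩
  refine ⟨‖z‖, z.arg, ⟨Complex.arg_nonneg_iff.mpr hb, ?_⟩,
    (Complex.norm_mul_sin_arg z).symm, (Complex.norm_mul_cos_arg z).symm⟩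
  by_contra! hlt
  have hz : 0 < ‖z‖ := by
    refine norm_pos_iff.mpr fun h => ?_
    rw [h, Complex.arg_zero] at hlt
    exact hlt.not_gt hΘ
  have hsin : 0 < sin (z.arg - Θ) :=
    sin_pos_of_pos_of_lt_pi (by linarith) (by linarith [Complex.arg_le_pi z])
  have hpolar : b * cos Θ - c * sin Θ = ‖z‖ * sin (z.arg - Θ) := by
    rw [sin_sub, mul_sub, ← mul_assoc, ← mul_assoc, Complex.norm_mul_sin_arg,
      Complex.norm_mul_cos_arg]
  linarith [mul_pos hz hsin]

lemma exists_polar_angle_mem_Icc {Θ b c : ℝ} (hΘ : 0 < Θ)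
    (hbc : b * (b * cos Θ - c * sin Θ) ≤ 0) :
    ∃ r θ, θ ∈ Set.Icc 0 Θ ∧ b = r * sin θ ∧ c = r * cos θ := by
  rcases mul_nonpos_iff.mp hbc with ⟨hb, ht⟩ | ⟨hb, ht⟩
  · exact exists_polar_angle_mem_Icc_of_nonneg hΘ hb ht
  · obtain ⟨r, θ, hθ, hb', hc'⟩ :=
      exists_polar_angle_mem_Icc_of_nonneg (c := -c) hΘ (neg_nonneg.mpr hb) (by linarith)
    exact ⟨-r, θ, hθ, by linarith, by linarith⟩

lemma exists_angle_mem_Ico_of_sq_add_sq_eq_one {u v : ℝ} (h : u ^ 2 + v ^ 2 = 1) :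
    ∃ α ∈ Set.Ico 0 (2 * π), cos α = u ∧ sin α = v := by
  set z : ℂ := ⟨u, v⟩
  have hz : ‖z‖ = 1 := by
    rw [Complex.norm_def, Complex.normSq_mk, ← sq, ← sq, h, Real.sqrt_one]
  have hcos := Complex.norm_mul_cos_arg z
  have hsin := Complex.norm_mul_sin_arg z
  rw [hz, one_mul] at hcos hsin
  rcases le_or_gt 0 z.arg with harg | harg
  · exact ⟨z.arg, ⟨harg, by linarith [Complex.arg_le_pi z, pi_pos]⟩, hcos, hsin⟩
  · refine ⟨z.arg + 2 * π, ⟨by linarith [Complex.neg_pi_lt_arg z], by linarith⟩, ?_, ?_⟩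
    · rwa [cos_add_two_pi]
    · rwa [sin_add_two_pi]

lemma rotQuat_mem_xzCone {Θ θ : ℝ} (hΘ : Θ ≤ π) (hθ : θ ∈ Set.Icc 0 Θ) (φ : ℝ) :
    rotQuat θ 0 φ ∈ xzCone Θ := by
  refine ⟨by simp [rotQuat], normSq_rotQuat θ 0 φ, ?_⟩
  have hsinθ : 0 ≤ sin θ := sin_nonneg_of_nonneg_of_le_pi hθ.1 (hθ.2.trans hΘ)
  have hsinΘθ : 0 ≤ sin (Θ - θ) :=
    sin_nonneg_of_nonneg_of_le_pi (by linarith [hθ.2]) (by linarith [hθ.1])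
  have : coneMargin Θ (rotQuat θ 0 φ) = sin (φ/2) ^ 2 * (sin θ * sin (Θ - θ)) := by
    simp only [coneMargin, rotQuat, sin_sub, sin_zero, cos_zero]; ring
  rw [this]
  positivity

lemma exists_rotQuat_eq_of_mem_xzCone {Θ : ℝ} (hΘ : 0 < Θ) {p : ℍ[ℝ]} (hp : p ∈ xzCone Θ) :
    ∃ θ ∈ Set.Icc 0 Θ, ∃ φ ∈ Set.Ico 0 (4 * π), rotQuat θ 0 φ = p := by
  obtain ⟨hj, hn, hm⟩ := hp
  have hcone : p.imI * (p.imI * cos Θ - p.imK * sin Θ) ≤ 0 := by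
    simp only [coneMargin, hj] at hm; nlinarith
  obtain ⟨r, θ, hθ, hb, hc⟩ := exists_polar_angle_mem_Icc hΘ hcone
  have hr : p.re ^ 2 + r ^ 2 = 1 := by
    rw [normSq_def', hb, hj, hc] at hn
    linear_combination hn - r ^ 2 * sin_sq_add_cos_sq θ
  obtain ⟨α, hα, hcos, hsin⟩ := exists_angle_mem_Ico_of_sq_add_sq_eq_one hr
  refine ⟨θ, hθ, 2 * α, ⟨by linarith [hα.1], by linarith [hα.2]⟩, ?_⟩
  ext <;> simp [rotQuat, hcos, hsin, hb, hc, hj]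

lemma Gxi_eq_image {Θ : ℝ} (hΘ₀ : 0 < Θ) (hΘπ : Θ ≤ π) : Gxi Θ = quatMat '' xzCone Θ := by
  ext M
  constructor
  · rintro ⟨θ, φ, hθ, -, rfl⟩
    exact ⟨_, rotQuat_mem_xzCone hΘπ hθ φ, (Rot_eq_quatMat θ 0 φ).symm⟩
  · rintro ⟨p, hp, rfl⟩
    obtain ⟨θ, hθ, φ, hφ, rfl⟩ := exists_rotQuat_eq_of_mem_xzCone hΘ₀ hp
    exact ⟨θ, φ, hθ, hφ, (Rot_eq_quatMat θ 0 φ).symm⟩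

lemma setMul_eq_mul (G₁ G₂ : Set (Matrix (Fin 2) (Fin 2) ℂ)) : setMul G₁ G₂ = G₁ * G₂ := by
  ext C
  simp [setMul, Set.mem_mul, eq_comm]

lemma Rot_mem_setMul_Gxi_iff {Θ : ℝ} (hΘ₀ : 0 < Θ) (hΘπ : Θ ≤ π) (θ ψ φ : ℝ) :
    Rot θ ψ φ ∈ setMul (Gxi Θ) (Gxi Θ) ↔ rotQuat θ ψ φ ∈ xzCone Θ * xzCone Θ := by
  rw [setMul_eq_mul, Gxi_eq_image hΘ₀ hΘπ, ← Set.image_mul, Rot_eq_quatMat,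
    quatMat_injective.mem_set_image]

def flipJ (q : ℍ[ℝ]) : ℍ[ℝ] := ⟨q.re, q.imI, -q.imJ, q.imK⟩

lemma flipJ_flipJ (q : ℍ[ℝ]) : flipJ (flipJ q) = q := by
  ext <;> simp [flipJ]

lemma normSq_flipJ (q : ℍ[ℝ]) : normSq (flipJ q) = normSq q := by
  rw [normSq_def', normSq_def']
  simp [flipJ]

lemma flipJ_rotQuat (θ ψ φ : ℝ) : flipJ (rotQuat θ ψ φ) = rotQuat θ (-ψ) φ := by
  ext <;> simp [flipJ, rotQuat]

lemma flipJ_mul_of_imJ_eq_zero {p p' : ℍ[ℝ]} (hp : p.imJ = 0) (hp' : p'.imJ = 0) :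
    flipJ (p * p') = p' * p := by
  ext <;> simp [flipJ, re_mul, imI_mul, imJ_mul, imK_mul, hp, hp'] <;> ring

lemma flipJ_mem_xzCone_mul {Θ : ℝ} {q : ℍ[ℝ]} (hq : q ∈ xzCone Θ * xzCone Θ) :
    flipJ q ∈ xzCone Θ * xzCone Θ := by
  obtain ⟨p, hp, p', hp', rfl⟩ := hq
  rw [flipJ_mul_of_imJ_eq_zero hp.1 hp'.1]
  exact Set.mul_mem_mul hp' hp

lemma eq_zero_of_neg_of_mul_nonneg {E₁ E₂ m n b t : ℝ} (hE₁ : E₁ < 0) (hE₂ : E₂ < 0)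
    (hm : 0 < m) (hn : 0 < n) (hbt : b * t ≤ 0)
    (h : 0 ≤ (E₁ * b + m * t) * (n * b + E₂ * t)) : b = 0 ∧ t = 0 := by
  have hexpand : (E₁ * b + m * t) * (n * b + E₂ * t) =
      E₁ * n * b ^ 2 + (E₁ * E₂ + m * n) * (b * t) + m * E₂ * t ^ 2 := by ring
  have h₁ : E₁ * n * b ^ 2 ≤ 0 :=
    mul_nonpos_of_nonpos_of_nonneg (mul_nonpos_of_nonpos_of_nonneg hE₁.le hn.le) (sq_nonneg b)
  have h₂ : (E₁ * E₂ + m * n) * (b * t) ≤ 0 :=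
    mul_nonpos_of_nonneg_of_nonpos (by nlinarith) hbt
  have h₃ : m * E₂ * t ^ 2 ≤ 0 :=
    mul_nonpos_of_nonpos_of_nonneg (mul_nonpos_of_nonneg_of_nonpos hm.le hE₂.le) (sq_nonneg t)
  have hb : E₁ * n * b ^ 2 = 0 := by linarith
  have ht : m * E₂ * t ^ 2 = 0 := by linarith
  exact ⟨by simpa [hE₁.ne, hn.ne'] using hb, by simpa [hm.ne', hE₂.ne] using ht⟩

lemma sq_add_sq_pos_of_coneMargin_neg {Θ : ℝ} {q : ℍ[ℝ]} (h : coneMargin Θ q < 0) :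
    0 < q.imI ^ 2 + q.imJ ^ 2 ∧ 0 < (q.imI * cos Θ - q.imK * sin Θ) ^ 2 + q.imJ ^ 2 := by
  constructor
  · by_contra! h'
    obtain ⟨hx, hy⟩ := (add_eq_zero_iff_of_nonneg (sq_nonneg _) (sq_nonneg _)).mp
      (h'.antisymm (by positivity))
    rw [sq_eq_zero_iff] at hx hy
    exact h.ne (by simp only [coneMargin, hx, hy]; ring)
  · by_contra! h'
    obtain ⟨hxz, hy⟩ := (add_eq_zero_iff_of_nonneg (sq_nonneg _) (sq_nonneg _)).mp
      (h'.antisymm (by positivity))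
    rw [sq_eq_zero_iff] at hxz hy
    exact h.ne (by simp only [coneMargin, hy]; linear_combination (-q.imI) * hxz)

lemma coneMargin_nonneg_of_mem_mul {Θ : ℝ} (hsΘ : 0 < sin Θ) {p p' : ℍ[ℝ]}
    (hp : p ∈ xzCone Θ) (hp' : p' ∈ xzCone Θ) :
    0 ≤ coneMargin Θ (p * p') ∨ 0 ≤ coneMargin Θ (flipJ (p * p')) := by
  by_contra! hE
  obtain ⟨hxy, hxzy⟩ := sq_add_sq_pos_of_coneMargin_neg hE.1
  obtain ⟨hj, hn, hm⟩ := hp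
  obtain ⟨hj', -, hm'⟩ := hp'
  rw [normSq_def'] at hn
  simp only [coneMargin, hj, hj'] at hn hm hm'
  set a := p.re
  set b := p.imI
  set c := p.imK
  set a' := p'.re
  set b' := p'.imI
  set c' := p'.imK
  set sT := sin Θ
  set cT := cos Θ
  have pyth : sT ^ 2 + cT ^ 2 = 1 := sin_sq_add_cos_sq Θ
  set w := a * a' - b * b' - c * c'
  set x := a * b' + b * a'
  set y := c * b' - b * c'
  set z := a * c' + c * a'
  have hq : p * p' = ⟨w, x, y, z⟩ := by
    ext <;> simp only [re_mul, imI_mul, imJ_mul, imK_mul, hj, hj'] <;> ring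
  simp only [hq, coneMargin, flipJ] at hE hxy hxzy
  set E₁ := sT * (x * z + w * y) - cT * (x ^ 2 + y ^ 2)
  set E₂ := sT * (x * z + w * -y) - cT * (x ^ 2 + (-y) ^ 2)
  set t := b * cT - c * sT
  have I1 : b' * (y * sT) = -(E₁ * b + (x ^ 2 + y ^ 2) * t) := by
    linear_combination (-(y * sT) * b') * hn
  have I2 : (b' * cT - c' * sT) * (y * sT) = ((x * cT - z * sT) ^ 2 + y ^ 2) * b + E₂ * t := by
    linear_combination (-(y * sT * cT) * b' + y * sT ^ 2 * c') * hn + b * y ^ 2 * pyth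
  have key : (E₁ * b + (x ^ 2 + y ^ 2) * t) * (((x * cT - z * sT) ^ 2 + y ^ 2) * b + E₂ * t) =
      (sT * (b' * c') - cT * b' ^ 2) * (y * sT) ^ 2 := by
    clear_value E₁ E₂ t w x y z
    linear_combination ((b' * cT - c' * sT) * (y * sT)) * I1 -
      (E₁ * b + (x ^ 2 + y ^ 2) * t) * I2
  have hbt : b * t ≤ 0 := by simp only [t]; linarith
  obtain ⟨hb, ht⟩ := eq_zero_of_neg_of_mul_nonneg hE.1 hE.2 hxy hxzy hbt
    (key ▸ mul_nonneg (by linarith) (sq_nonneg _))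
  have hc : c = 0 := by
    have : c * sT = 0 := by simp only [t, hb] at ht; linarith
    simpa [hsΘ.ne'] using this
  have hE₁ : E₁ = sT * (b' * c') - cT * b' ^ 2 := by
    simp only [E₁, w, x, y, z, hb, hc] at hn ⊢
    linear_combination (sT * b' * c' - cT * b' ^ 2) * hn
  linarith [hE.1]

lemma one_mem_xzCone (Θ : ℝ) : (1 : ℍ[ℝ]) ∈ xzCone Θ :=
  ⟨rfl, map_one normSq, by simp [coneMargin]⟩

lemma mem_xzCone_mul_of_star_mul_mem {Θ : ℝ} {p q : ℍ[ℝ]} (hp : p ∈ xzCone Θ)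
    (h : star p * q ∈ xzCone Θ) : q ∈ xzCone Θ * xzCone Θ :=
  ⟨p, hp, star p * q, h, by
    show p * (star p * q) = q
    rw [← mul_assoc, self_mul_star, hp.2.1, coe_one, one_mul]⟩

lemma mem_xzCone_mul_of_coneMargin_nonneg {Θ : ℝ} {q : ℍ[ℝ]} (hq : normSq q = 1)
    (hE : 0 ≤ coneMargin Θ q) : q ∈ xzCone Θ * xzCone Θ := by
  set u := q.imI * cos Θ - q.imK * sin Θ
  rcases (add_nonneg (sq_nonneg u) (sq_nonneg q.imJ)).eq_or_lt with hN | hN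
  · obtain ⟨-, hy⟩ := (add_eq_zero_iff_of_nonneg (sq_nonneg u) (sq_nonneg q.imJ)).mp hN.symm
    refine mem_xzCone_mul_of_star_mul_mem (one_mem_xzCone Θ) ?_
    rw [star_one, one_mul]
    exact ⟨pow_eq_zero_iff two_ne_zero |>.mp hy, hq, hE⟩
  set N := √(u ^ 2 + q.imJ ^ 2)
  have hF : (u ^ 2 + q.imJ ^ 2 * (sin Θ ^ 2 + cos Θ ^ 2)) / N ^ 2 = 1 := by
    rw [sin_sq_add_cos_sq, mul_one, sq_sqrt hN.le, div_self hN.ne']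
  set p : ℍ[ℝ] := ⟨u / N, q.imJ * sin Θ / N, 0, q.imJ * cos Θ / N⟩
  have hp : p ∈ xzCone Θ := by
    refine ⟨rfl, ?_, ?_⟩
    · rw [normSq_def']
      simp only [p]
      linear_combination hF
    · have : coneMargin Θ p = 0 := by
        simp only [coneMargin, p]
        ring
      exact this.ge
  refine mem_xzCone_mul_of_star_mul_mem hp ⟨?_, ?_, ?_⟩
  · simp only [imJ_mul, re_star, imI_star, imJ_star, imK_star]
    simp only [p, u]
    ring
  · rw [map_mul, normSq_star, hp.2.1, hq, one_mul]
  · have : coneMargin Θ (star p * q) = coneMargin Θ q *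
        ((u ^ 2 + q.imJ ^ 2 * (sin Θ ^ 2 + cos Θ ^ 2)) / N ^ 2) := by
      simp only [coneMargin, re_mul, imI_mul, imJ_mul, imK_mul, re_star, imI_star, imJ_star,
        imK_star]
      simp only [p, u]
      ring
    rwa [this, hF, mul_one]

theorem mem_xzCone_mul_iff {Θ : ℝ} (hsΘ : 0 < sin Θ) {q : ℍ[ℝ]} (hq : normSq q = 1) :
    q ∈ xzCone Θ * xzCone Θ ↔ 0 ≤ coneMargin Θ q ∨ 0 ≤ coneMargin Θ (flipJ q) := by
  constructor
  · rintro ⟨p, hp, p', hp', rfl⟩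
    exact coneMargin_nonneg_of_mem_mul hsΘ hp hp'
  · rintro (h | h)
    · exact mem_xzCone_mul_of_coneMargin_nonneg hq h
    · rw [← flipJ_flipJ q]
      exact flipJ_mem_xzCone_mul
        (mem_xzCone_mul_of_coneMargin_nonneg ((normSq_flipJ q).trans hq) h)

lemma coneMargin_pi_nonneg (q : ℍ[ℝ]) : 0 ≤ coneMargin π q := by
  simp only [coneMargin, sin_pi, cos_pi]
  nlinarith [sq_nonneg q.imI, sq_nonneg q.imJ]

lemma coneMargin_rotQuat (Θ θ ψ φ : ℝ) :
    coneMargin Θ (rotQuat θ ψ φ) = sin (φ/2) * sin θ *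
      (sin Θ * (sin ψ * cos (φ/2) + cos ψ * sin (φ/2) * cos θ) - cos Θ * (sin (φ/2) * sin θ)) := by
  simp only [coneMargin, rotQuat]
  linear_combination (-cos Θ * (sin (φ/2) * sin θ) ^ 2) * sin_sq_add_cos_sq ψ

lemma mul_sub_mul_nonneg_iff {s c T N : ℝ} (hs : 0 < s) :
    0 ≤ T * (s * N - c * T) ↔ T = 0 ∨ N / T ≥ c / s := by
  rcases eq_or_ne T 0 with rfl | hT
  · simp
  have : T * (s * N - c * T) = T ^ 2 * s * (N / T - c / s) := by field_simp
  rw [this, mul_nonneg_iff_of_pos_left (by positivity), sub_nonneg]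
  simp [hT]

lemma sin_half_eq_zero_iff {φ : ℝ} (hφ : φ ∈ Set.Ico 0 (4 * π)) :
    sin (φ/2) = 0 ↔ φ = 0 ∨ φ = 2 * π := by
  constructor
  · intro h
    obtain ⟨n, hn⟩ := sin_eq_zero_iff.mp h
    have h0 : (0 : ℝ) ≤ n := by nlinarith [pi_pos, hφ.1]
    have h2 : (n : ℝ) < 2 := by nlinarith [pi_pos, hφ.2]
    obtain rfl | rfl : n = 0 ∨ n = 1 := by
      have : 0 ≤ n := by exact_mod_cast h0
      have : n < 2 := by exact_mod_cast h2
      omega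
    · left; push_cast at hn; linarith
    · right; push_cast at hn; linarith
  · rintro (rfl | rfl)
    · simp
    · simp [mul_div_cancel_left₀]

lemma sin_half_mul_sin_eq_zero_iff {θ φ : ℝ} (hθ : θ ∈ Set.Ico 0 π)
    (hφ : φ ∈ Set.Ico 0 (4 * π)) :
    sin (φ/2) * sin θ = 0 ↔ (φ = 0 ∨ φ = 2 * π) ∨ θ = 0 := by
  rw [mul_eq_zero, sin_half_eq_zero_iff hφ,
    sin_eq_zero_iff_of_lt_of_lt (by linarith [hθ.1, pi_pos]) hθ.2]

theorem stmt7_general (Θ : ℝ) (hΘ : Θ ∈ Set.Ioc 0 π)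
    (θ ψ φ : ℝ) (hθ : θ ∈ Set.Ico 0 π) (hφ : φ ∈ Set.Ico 0 (4*π)) :
    Rot θ ψ φ ∈ setMul (Gxi Θ) (Gxi Θ) ↔
      (φ = 0 ∨ φ = 2*π) ∨
      θ = 0 ∨
      ((Real.sin ψ * Real.cos (φ/2) + Real.cos ψ * Real.sin (φ/2) * Real.cos θ) /
          (Real.sin (φ/2) * Real.sin θ) ≥ Real.cos Θ / Real.sin Θ ∨
       (-Real.sin ψ * Real.cos (φ/2) + Real.cos ψ * Real.sin (φ/2) * Real.cos θ) /
          (Real.sin (φ/2) * Real.sin θ) ≥ Real.cos Θ / Real.sin Θ) ∨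
      Θ = π := by
  rw [Rot_mem_setMul_Gxi_iff hΘ.1 hΘ.2]
  rcases hΘ.2.lt_or_eq with hΘπ | rfl
  · have hsΘ : 0 < sin Θ := sin_pos_of_pos_of_lt_pi hΘ.1 hΘπ
    rw [mem_xzCone_mul_iff hsΘ (normSq_rotQuat θ ψ φ), flipJ_rotQuat, coneMargin_rotQuat,
      coneMargin_rotQuat, mul_sub_mul_nonneg_iff hsΘ, mul_sub_mul_nonneg_iff hsΘ,
      sin_half_mul_sin_eq_zero_iff hθ hφ, sin_neg, cos_neg]
    have := hΘπ.ne
    tauto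
  · simp only [or_true, iff_true]
    exact mem_xzCone_mul_of_coneMargin_nonneg (normSq_rotQuat θ ψ φ) (coneMargin_pi_nonneg _)

theorem stmt7 (Θ : ℝ) (hΘ : Θ ∈ Set.Ioc 0 π)
    (θ ψ φ : ℝ) (hθ : θ ∈ Set.Ico 0 π) (hψ : ψ ∈ Set.Ico 0 π) (hφ : φ ∈ Set.Ico 0 (4*π)) :
    Rot θ ψ φ ∈ setMul (Gxi Θ) (Gxi Θ) ↔
      (φ = 0 ∨ φ = 2*π) ∨
      θ = 0 ∨
      ((Real.sin ψ * Real.cos (φ/2) + Real.cos ψ * Real.sin (φ/2) * Real.cos θ) /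
          (Real.sin (φ/2) * Real.sin θ) ≥ Real.cos Θ / Real.sin Θ ∨
       (-Real.sin ψ * Real.cos (φ/2) + Real.cos ψ * Real.sin (φ/2) * Real.cos θ) /
          (Real.sin (φ/2) * Real.sin θ) ≥ Real.cos Θ / Real.sin Θ) ∨
      Θ = π :=
  stmt7_general Θ hΘ θ ψ φ hθ hφ
end

section
/- Fix Θ ∈ (0,π/2] and let l be a positive integer. Let θ ∈ [0,π), ψ ∈ [0,π), φ ∈ [0,4π). Then there exist β₀, …, β_{l−1} ∈ [0,4π) and γ₁, …, γ_{l−1} ∈ [0,4π) such that R(θ,ψ,φ) = R(Θ,0,β₀)·R(0,0,γ₁)·R(Θ,0,β₁)·⋯·R(0,0,γ_{l−1})·R(Θ,0,β_{l−1}) (an alternating m–z–m–…–z–m product of 2l−1 rotations about m̂ = (sin Θ, 0, cos Θ) and ẑ, beginning and ending with m̂) if and only if |δ₂(θ,ψ,φ,Θ)| ≤ (l−1)·Θ. -/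
open Real

/-- δ₂(θ,ψ,φ,Θ). -/
noncomputable def delta2 (θ ψ φ Θ : ℝ) : ℝ :=
  Real.arcsin (Real.sin (φ/2) *
    Real.sqrt ((Real.cos Θ * Real.cos ψ * Real.sin θ - Real.cos θ * Real.sin Θ)^2 +
      (Real.sin θ * Real.sin ψ)^2))

/-!
Conjugating by `yRot (Θ/2)` sends the axis `m̂` to `ẑ` and `ẑ` to the axis tilted by `-Θ`, so the
question becomes which `U ∈ SU(2)` are alternating products `Z β₀ * A γ₁ * Z β₁ * ⋯ * A γₖ * Z βₖ`
of `z`-rotations `Z` and rotations `A` about the tilted axis. The invariant is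
`tilt U = arcsin ‖U 0 1‖`: it vanishes on `Z`, is at most `Θ` on `A`, and is subadditive, which
gives necessity; on the conjugate of `R(θ,ψ,φ)` it equals `|δ₂|`. Conversely, the Euler
`z`–`y`–`z` decomposition writes `U = Z * yRot (tilt U) * Z`; splitting
`yRot (k μ) = yRot μ ^ k` with `μ ≤ Θ` and writing each `yRot μ` as `Z * A * Z` produces the
alternating product.
-/

open Complex ComplexConjugate

noncomputable def cayleyKlein (a b : ℂ) : Matrix (Fin 2) (Fin 2) ℂ :=
  !![a, b; -conj b, conj a]

namespace cayleyKlein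

lemma apply_zero_one (a b : ℂ) : cayleyKlein a b 0 1 = b := rfl

lemma mul (a b c d : ℂ) :
    cayleyKlein a b * cayleyKlein c d = cayleyKlein (a * c - b * conj d) (a * d + b * conj c) := by
  ext i j; fin_cases i <;> fin_cases j <;> simp [cayleyKlein] <;> ring

lemma one_zero : cayleyKlein 1 0 = 1 := by
  simp [cayleyKlein, Matrix.one_fin_two]

lemma normSq_mul_sub_add_normSq_mul_add (a b c d : ℂ) :
    normSq (a * c - b * conj d) + normSq (a * d + b * conj c) =
      (normSq a + normSq b) * (normSq c + normSq d) := by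
  simp only [normSq_apply, sub_re, sub_im, add_re, add_im, mul_re, mul_im, conj_re, conj_im]
  ring

end cayleyKlein

/-- `SU(2)`, in Cayley–Klein form. -/
def unitCayleyKlein : Submonoid (Matrix (Fin 2) (Fin 2) ℂ) where
  carrier := {U | ∃ a b : ℂ, normSq a + normSq b = 1 ∧ cayleyKlein a b = U}
  one_mem' := ⟨1, 0, by simp, cayleyKlein.one_zero⟩
  mul_mem' := by
    rintro _ _ ⟨a, b, hab, rfl⟩ ⟨c, d, hcd, rfl⟩
    exact ⟨_, _, by rw [cayleyKlein.normSq_mul_sub_add_normSq_mul_add, hab, hcd, one_mul],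
      (cayleyKlein.mul a b c d).symm⟩

lemma arcsin_sin_le {x : ℝ} (hx : 0 ≤ x) : Real.arcsin (Real.sin x) ≤ x := by
  rcases le_or_gt x (π / 2) with h | h
  · rw [Real.arcsin_sin (by linarith [Real.pi_pos]) h]
  · linarith [Real.arcsin_le_pi_div_two (Real.sin x)]

lemma abs_arcsin (x : ℝ) : |Real.arcsin x| = Real.arcsin |x| := by
  rcases le_or_gt 0 x with h | h
  · rw [abs_of_nonneg h, abs_of_nonneg (Real.arcsin_nonneg.2 h)]
  · rw [abs_of_neg h, abs_of_neg (Real.arcsin_lt_zero.2 h), Real.arcsin_neg]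

/-- Half the angle by which the rotation represented by `U` moves the `z`-axis. -/
noncomputable def tilt (U : Matrix (Fin 2) (Fin 2) ℂ) : ℝ := Real.arcsin ‖U 0 1‖

lemma norm_snd_le_one {a b : ℂ} (hab : normSq a + normSq b = 1) : ‖b‖ ≤ 1 := by
  rw [← sq_le_one_iff₀ (norm_nonneg b), Complex.sq_norm]
  linarith [normSq_nonneg a]

lemma sin_arcsin_norm_snd {a b : ℂ} (hab : normSq a + normSq b = 1) :
    Real.sin (Real.arcsin ‖b‖) = ‖b‖ :=
  Real.sin_arcsin (by linarith [norm_nonneg b]) (norm_snd_le_one hab)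

lemma cos_arcsin_norm_snd {a b : ℂ} (hab : normSq a + normSq b = 1) :
    Real.cos (Real.arcsin ‖b‖) = ‖a‖ := by
  rw [Real.cos_arcsin, Complex.sq_norm, norm_def, ← hab, add_sub_cancel_right]

lemma tilt_nonneg (U : Matrix (Fin 2) (Fin 2) ℂ) : 0 ≤ tilt U :=
  Real.arcsin_nonneg.2 (norm_nonneg _)

lemma tilt_mul_le {U V : Matrix (Fin 2) (Fin 2) ℂ} (hU : U ∈ unitCayleyKlein)
    (hV : V ∈ unitCayleyKlein) : tilt (U * V) ≤ tilt U + tilt V := by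
  obtain ⟨a, b, hab, rfl⟩ := hU
  obtain ⟨c, d, hcd, rfl⟩ := hV
  simp only [tilt, cayleyKlein.mul, cayleyKlein.apply_zero_one]
  have hsin : ‖a * d + b * conj c‖ ≤ Real.sin (Real.arcsin ‖b‖ + Real.arcsin ‖d‖) := by
    rw [Real.sin_add, sin_arcsin_norm_snd hab, sin_arcsin_norm_snd hcd,
      cos_arcsin_norm_snd hab, cos_arcsin_norm_snd hcd]
    calc ‖a * d + b * conj c‖ ≤ ‖a * d‖ + ‖b * conj c‖ := norm_add_le _ _
      _ = ‖b‖ * ‖c‖ + ‖a‖ * ‖d‖ := by rw [norm_mul, norm_mul, norm_conj]; ring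
  calc Real.arcsin ‖a * d + b * conj c‖
      ≤ Real.arcsin (Real.sin (Real.arcsin ‖b‖ + Real.arcsin ‖d‖)) := Real.monotone_arcsin hsin
    _ ≤ _ := arcsin_sin_le (add_nonneg (Real.arcsin_nonneg.2 (norm_nonneg b))
        (Real.arcsin_nonneg.2 (norm_nonneg d)))

lemma Rot_eq_cayleyKlein (θ ψ φ : ℝ) :
    Rot θ ψ φ = cayleyKlein ((Real.cos (φ/2) : ℂ) - I * (Real.sin (φ/2) : ℂ) * (Real.cos θ : ℂ))
      (-I * (Real.sin (φ/2) : ℂ) * (Real.sin θ : ℂ) * exp (-(I * (ψ : ℂ)))) := by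
  simp [Rot, cayleyKlein, ← exp_conj, ← cos_conj, ← sin_conj, map_div₀, map_ofNat, conj_ofReal]

lemma Rot_mem (θ ψ φ : ℝ) : Rot θ ψ φ ∈ unitCayleyKlein := by
  refine ⟨_, _, ?_, (Rot_eq_cayleyKlein θ ψ φ).symm⟩
  have h1 : normSq (exp (-(I * (ψ:ℂ)))) = 1 := by
    rw [← Complex.sq_norm, norm_exp]; simp
  simp only [normSq_mul, h1, mul_one]
  simp [normSq_apply, -ofReal_cos, -ofReal_sin]
  linear_combination Real.sin_sq_add_cos_sq (φ/2) + Real.sin (φ/2) ^ 2 * Real.sin_sq_add_cos_sq θ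

lemma tilt_Rot (θ ψ φ : ℝ) : tilt (Rot θ ψ φ) = Real.arcsin (|Real.sin (φ/2)| * |Real.sin θ|) := by
  simp [tilt, Rot, norm_exp, -ofReal_sin, -ofReal_cos]

lemma Rot_zero_zero_eq_cayleyKlein (β : ℝ) : Rot 0 0 β = cayleyKlein (exp (-(β / 2) * I)) 0 := by
  rw [Rot_eq_cayleyKlein, ← cos_sub_sin_I]
  congr 1 <;> simp [mul_comm I]

lemma Rot_zero_zero_add (s t : ℝ) : Rot 0 0 (s + t) = Rot 0 0 s * Rot 0 0 t := by
  simp only [Rot_zero_zero_eq_cayleyKlein, cayleyKlein.mul, map_zero, mul_zero, sub_zero,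
    ← Complex.exp_add]
  push_cast; ring_nf

lemma Rot_zero_zero_zero : Rot 0 0 0 = 1 := by
  simp [Rot_zero_zero_eq_cayleyKlein, cayleyKlein.one_zero]

lemma Rot_periodic (θ ψ : ℝ) : Function.Periodic (Rot θ ψ) (4 * π) := by
  intro φ
  simp only [Rot, show (φ + 4 * π) / 2 = φ / 2 + 2 * π by ring, Real.cos_add_two_pi,
    Real.sin_add_two_pi]

/-- The rotation by `-2t` about the `y`-axis. -/
noncomputable def yRot (t : ℝ) : Matrix (Fin 2) (Fin 2) ℂ :=
  cayleyKlein (Real.cos t : ℂ) (Real.sin t : ℂ)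

lemma yRot_add (s t : ℝ) : yRot (s + t) = yRot s * yRot t := by
  simp only [yRot, cayleyKlein.mul, conj_ofReal, Real.cos_add, Real.sin_add]
  push_cast; ring_nf

lemma yRot_zero : yRot 0 = 1 := by
  simp [yRot, cayleyKlein.one_zero]

lemma yRot_nat_mul (k : ℕ) (t : ℝ) : yRot (k * t) = yRot t ^ k := by
  induction k with
  | zero => simp [yRot_zero]
  | succ k ih => rw [Nat.cast_succ, add_one_mul, yRot_add, ih, pow_succ]

lemma yRot_mem (t : ℝ) : yRot t ∈ unitCayleyKlein :=
  ⟨_, _, by rw [normSq_ofReal, normSq_ofReal, ← sq, ← sq, Real.cos_sq_add_sin_sq], rfl⟩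

lemma yRot_neg_mul_self (t : ℝ) : yRot (-t) * yRot t = 1 := by
  rw [← yRot_add, neg_add_cancel, yRot_zero]

lemma yRot_mul_neg_self (t : ℝ) : yRot t * yRot (-t) = 1 := by
  rw [← yRot_add, add_neg_cancel, yRot_zero]

noncomputable def yConj (t : ℝ) : Matrix (Fin 2) (Fin 2) ℂ ≃* Matrix (Fin 2) (Fin 2) ℂ where
  toFun X := yRot t * X * yRot (-t)
  invFun X := yRot (-t) * X * yRot t
  left_inv X := by
    simp only [← mul_assoc, yRot_neg_mul_self, one_mul]
    rw [mul_assoc, yRot_neg_mul_self, mul_one]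
  right_inv X := by
    simp only [← mul_assoc, yRot_mul_neg_self, one_mul]
    rw [mul_assoc, yRot_mul_neg_self, mul_one]
  map_mul' X Y := by
    change yRot t * (X * Y) * yRot (-t) = yRot t * X * yRot (-t) * (yRot t * Y * yRot (-t))
    calc yRot t * (X * Y) * yRot (-t) = yRot t * X * (yRot (-t) * yRot t) * Y * yRot (-t) := by
          rw [yRot_neg_mul_self]; noncomm_ring
      _ = yRot t * X * yRot (-t) * (yRot t * Y * yRot (-t)) := by noncomm_ring

lemma yConj_apply (t : ℝ) (X : Matrix (Fin 2) (Fin 2) ℂ) :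
    yConj t X = yRot t * X * yRot (-t) := rfl

lemma yConj_Rot (Θ θ ψ φ : ℝ) :
    yConj (Θ / 2) (Rot θ ψ φ) = cayleyKlein
      ((Real.cos (φ/2) : ℂ) - I * (Real.sin (φ/2) : ℂ) *
        (Real.cos Θ * Real.cos θ + Real.sin Θ * Real.sin θ * Real.cos ψ : ℝ))
      (-I * (Real.sin (φ/2) : ℂ) *
        ((Real.cos Θ * Real.cos ψ * Real.sin θ - Real.cos θ * Real.sin Θ : ℝ)
        - I * (Real.sin θ * Real.sin ψ : ℝ))) := by
  have hexp : exp (-(I * (ψ : ℂ))) = (Real.cos ψ : ℂ) - I * (Real.sin ψ : ℂ) := by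
    rw [mul_comm, ← neg_mul, ← cos_sub_sin_I, ofReal_cos, ofReal_sin, mul_comm I]
  have hcos : (Real.cos Θ : ℂ) = (Real.cos (Θ/2) : ℂ) ^ 2 - (Real.sin (Θ/2) : ℂ) ^ 2 := by
    rw [← ofReal_pow, ← ofReal_pow, ← ofReal_sub, ← Real.cos_two_mul',
      mul_div_cancel₀ Θ two_ne_zero]
  have hsin : (Real.sin Θ : ℂ) = 2 * (Real.sin (Θ/2) : ℂ) * (Real.cos (Θ/2) : ℂ) := by
    rw [← ofReal_ofNat, ← ofReal_mul, ← ofReal_mul, ← Real.sin_two_mul,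
      mul_div_cancel₀ Θ two_ne_zero]
  have hpyth : (Real.sin (Θ/2) : ℂ) ^ 2 + (Real.cos (Θ/2) : ℂ) ^ 2 = 1 := by
    exact_mod_cast Real.sin_sq_add_cos_sq (Θ/2)
  rw [yConj_apply, Rot_eq_cayleyKlein, yRot, yRot, cayleyKlein.mul, cayleyKlein.mul, hexp]
  simp only [map_sub, map_mul, map_neg, conj_ofReal, conj_I, Real.cos_neg, Real.sin_neg,
    ofReal_neg, ofReal_sub, ofReal_mul, ofReal_add, hcos, hsin]
  congr 1
  · linear_combination (Real.cos (φ/2) : ℂ) * hpyth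
  · linear_combination I ^ 2 * (Real.sin (φ/2) : ℂ) * (Real.sin θ : ℂ) * (Real.sin ψ : ℂ) * hpyth

lemma yConj_mem {U : Matrix (Fin 2) (Fin 2) ℂ} (t : ℝ) (hU : U ∈ unitCayleyKlein) :
    yConj t U ∈ unitCayleyKlein :=
  unitCayleyKlein.mul_mem (unitCayleyKlein.mul_mem (yRot_mem t) hU) (yRot_mem (-t))

lemma yConj_Rot_zero (Θ θ φ : ℝ) : yConj (Θ / 2) (Rot θ 0 φ) = Rot (θ - Θ) 0 φ := by
  rw [yConj_Rot, Rot_eq_cayleyKlein, Real.cos_sub, Real.sin_sub]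
  simp only [Real.cos_zero, Real.sin_zero, ofReal_zero, mul_zero, neg_zero, Complex.exp_zero,
    mul_one]
  congr 1 <;> push_cast <;> ring

lemma tilt_yConj_Rot (Θ θ ψ φ : ℝ) : tilt (yConj (Θ / 2) (Rot θ ψ φ)) = |delta2 θ ψ φ Θ| := by
  set x := Real.cos Θ * Real.cos ψ * Real.sin θ - Real.cos θ * Real.sin Θ
  set y := Real.sin θ * Real.sin ψ
  have hxy : ‖(x : ℂ) - I * (y : ℂ)‖ = √(x ^ 2 + y ^ 2) := by
    rw [show (x : ℂ) - I * (y : ℂ) = x + (-y : ℝ) * I by push_cast; ring, norm_def,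
      normSq_add_mul_I, neg_sq]
  rw [delta2, abs_arcsin, abs_mul, abs_of_nonneg (Real.sqrt_nonneg _), yConj_Rot, tilt,
    cayleyKlein.apply_zero_one, norm_mul, norm_mul, norm_neg, norm_I, one_mul, norm_real,
    Real.norm_eq_abs, hxy]

section alternatingProd

variable {M : Type*} [Monoid M]

/-- `Z β₀ * A γ₁ * Z β₁ * ⋯ * A γₖ * Z βₖ`. -/
def alternatingProd (Z A : ℝ → M) (k : ℕ) (β γ : ℕ → ℝ) : M :=
  Z (β 0) * ((List.range k).map fun i => A (γ (i + 1)) * Z (β (i + 1))).prod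

lemma alternatingProd_zero (Z A : ℝ → M) (β γ : ℕ → ℝ) : alternatingProd Z A 0 β γ = Z (β 0) := by
  simp [alternatingProd]

lemma alternatingProd_succ (Z A : ℝ → M) (k : ℕ) (β γ : ℕ → ℝ) :
    alternatingProd Z A (k + 1) β γ =
      Z (β 0) * A (γ 1) * alternatingProd Z A k (fun i => β (i + 1)) (fun i => γ (i + 1)) := by
  simp [alternatingProd, List.range_succ_eq_map, List.map_map, Function.comp_def, mul_assoc]

lemma map_alternatingProd {N F : Type*} [Monoid N] [FunLike F M N] [MonoidHomClass F M N] (f : F)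
    (Z A : ℝ → M) (k : ℕ) (β γ : ℕ → ℝ) :
    f (alternatingProd Z A k β γ) = alternatingProd (f ∘ Z) (f ∘ A) k β γ := by
  simp [alternatingProd, map_list_prod, List.map_map, Function.comp_def]

lemma alternatingProd_mem {S : Submonoid M} {Z A : ℝ → M} (hZ : ∀ t, Z t ∈ S) (hA : ∀ t, A t ∈ S)
    (k : ℕ) (β γ : ℕ → ℝ) : alternatingProd Z A k β γ ∈ S := by
  refine S.mul_mem (hZ _) (S.list_prod_mem ?_)
  simp only [List.mem_map]
  rintro _ ⟨i, -, rfl⟩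
  exact S.mul_mem (hA _) (hZ _)

lemma exists_alternatingProd_eq_mul_pow_mul {Z : ℝ → M} (hZ : ∀ s t, Z (s + t) = Z s * Z t)
    (A : ℝ → M) (γ x y : ℝ) (k : ℕ) (α α' : ℝ) :
    ∃ β : ℕ → ℝ, Z α * (Z x * A γ * Z y) ^ k * Z α' = alternatingProd Z A k β fun _ => γ := by
  induction k generalizing α with
  | zero => exact ⟨fun _ => α + α', by simp [alternatingProd_zero, hZ]⟩
  | succ k ih =>
    obtain ⟨β, hβ⟩ := ih y
    refine ⟨fun i => if i = 0 then α + x else β (i - 1), ?_⟩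
    simp only [alternatingProd_succ, pow_succ', ↓reduceIte, Nat.add_one_ne_zero,
      Nat.add_sub_cancel, ← hβ, hZ, mul_assoc]

end alternatingProd

lemma tilt_Rot_le {θ : ℝ} (hθ : |θ| ≤ π / 2) (ψ φ : ℝ) : tilt (Rot θ ψ φ) ≤ |θ| := by
  obtain ⟨hθ₁, hθ₂⟩ := abs_le.1 hθ
  calc tilt (Rot θ ψ φ) ≤ Real.arcsin |Real.sin θ| := by
        rw [tilt_Rot]
        exact Real.monotone_arcsin
          (mul_le_of_le_one_left (abs_nonneg _) (Real.abs_sin_le_one _))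
    _ = |θ| := by rw [← abs_arcsin, Real.arcsin_sin hθ₁ hθ₂]

lemma tilt_Rot_zero (ψ φ : ℝ) : tilt (Rot 0 ψ φ) = 0 := by
  simp [tilt_Rot]

lemma tilt_alternatingProd_le {Θ : ℝ} (hΘ₀ : 0 ≤ Θ) (hΘ : Θ ≤ π / 2) (k : ℕ) (β γ : ℕ → ℝ) :
    tilt (alternatingProd (Rot 0 0) (Rot (-Θ) 0) k β γ) ≤ k * Θ := by
  induction k generalizing β γ with
  | zero => simp [alternatingProd_zero, tilt_Rot_zero]
  | succ k ih =>
    have hA : tilt (Rot (-Θ) 0 (γ 1)) ≤ Θ := by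
      simpa [abs_of_nonneg hΘ₀] using
        tilt_Rot_le (θ := -Θ) (by rwa [abs_neg, abs_of_nonneg hΘ₀]) 0 (γ 1)
    have hP := ih (fun i => β (i + 1)) (fun i => γ (i + 1))
    have hmem := alternatingProd_mem (S := unitCayleyKlein) (Rot_mem 0 0) (Rot_mem (-Θ) 0) k
      (fun i => β (i + 1)) (fun i => γ (i + 1))
    rw [alternatingProd_succ]
    calc _ ≤ tilt (Rot 0 0 (β 0) * Rot (-Θ) 0 (γ 1)) + _ :=
          tilt_mul_le (unitCayleyKlein.mul_mem (Rot_mem _ _ _) (Rot_mem _ _ _)) hmem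
      _ ≤ tilt (Rot 0 0 (β 0)) + tilt (Rot (-Θ) 0 (γ 1)) + _ := by
          gcongr; exact tilt_mul_le (Rot_mem _ _ _) (Rot_mem _ _ _)
      _ ≤ ((k + 1 : ℕ) : ℝ) * Θ := by rw [tilt_Rot_zero]; push_cast; linarith

lemma exists_eq_Rot_mul_yRot_mul_Rot {U : Matrix (Fin 2) (Fin 2) ℂ} (hU : U ∈ unitCayleyKlein) :
    ∃ α α', U = Rot 0 0 α * yRot (tilt U) * Rot 0 0 α' := by
  obtain ⟨a, b, hab, rfl⟩ := hU
  refine ⟨-(arg a + arg b), arg b - arg a, ?_⟩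
  rw [tilt, cayleyKlein.apply_zero_one, yRot, cos_arcsin_norm_snd hab, sin_arcsin_norm_snd hab,
    Rot_zero_zero_eq_cayleyKlein, Rot_zero_zero_eq_cayleyKlein, cayleyKlein.mul, cayleyKlein.mul]
  simp only [map_zero, mul_zero, zero_mul, sub_zero, add_zero, zero_add]
  congr 1
  · conv_lhs => rw [← norm_mul_exp_arg_mul_I a]
    rw [mul_comm _ (‖a‖ : ℂ), mul_assoc, ← Complex.exp_add]
    congr 2
    push_cast; ring
  · conv_lhs => rw [← norm_mul_exp_arg_mul_I b]
    rw [← exp_conj, mul_comm _ (‖b‖ : ℂ), mul_assoc, ← Complex.exp_add]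
    congr 2
    simp only [map_mul, map_neg, map_div₀, conj_ofReal, conj_I, map_ofNat]
    push_cast; ring

lemma exists_yRot_eq_Rot_mul_Rot_mul_Rot {Θ μ : ℝ} (hΘ₀ : 0 < Θ) (hΘ : Θ ≤ π / 2)
    (hμ₀ : 0 ≤ μ) (hμ : μ ≤ Θ) :
    ∃ x γ y, yRot μ = Rot 0 0 x * Rot (-Θ) 0 γ * Rot 0 0 y := by
  have hsinΘ : 0 < Real.sin Θ := Real.sin_pos_of_pos_of_lt_pi hΘ₀ (by linarith [Real.pi_pos])
  have hsinμ : 0 ≤ Real.sin μ := Real.sin_nonneg_of_nonneg_of_le_pi hμ₀ (by linarith)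
  have hratio : Real.sin μ / Real.sin Θ ≤ 1 :=
    (div_le_one hsinΘ).2 (Real.sin_le_sin_of_le_of_le_pi_div_two (by linarith) hΘ hμ)
  set γ := 2 * Real.arcsin (Real.sin μ / Real.sin Θ)
  have htilt : tilt (Rot (-Θ) 0 γ) = μ := by
    rw [tilt_Rot, show γ / 2 = Real.arcsin (Real.sin μ / Real.sin Θ) by ring,
      Real.sin_arcsin (by linarith [div_nonneg hsinμ hsinΘ.le]) hratio, Real.sin_neg, abs_neg,
      abs_of_pos hsinΘ, abs_of_nonneg (div_nonneg hsinμ hsinΘ.le), div_mul_cancel₀ _ hsinΘ.ne',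
      Real.arcsin_sin (by linarith) (by linarith)]
  obtain ⟨α, α', h⟩ := exists_eq_Rot_mul_yRot_mul_Rot (Rot_mem (-Θ) 0 γ)
  rw [htilt] at h
  refine ⟨-α, γ, -α', ?_⟩
  rw [h]
  simp only [← mul_assoc, ← Rot_zero_zero_add, neg_add_cancel, Rot_zero_zero_zero, one_mul]
  rw [mul_assoc, ← Rot_zero_zero_add, add_neg_cancel, Rot_zero_zero_zero, mul_one]

lemma exists_alternatingProd_eq {Θ : ℝ} (hΘ₀ : 0 < Θ) (hΘ : Θ ≤ π / 2) {k : ℕ}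
    {U : Matrix (Fin 2) (Fin 2) ℂ} (hU : U ∈ unitCayleyKlein) (h : tilt U ≤ k * Θ) :
    ∃ β γ, U = alternatingProd (Rot 0 0) (Rot (-Θ) 0) k β γ := by
  obtain ⟨μ, hμ₀, hμΘ, hkμ⟩ : ∃ μ, 0 ≤ μ ∧ μ ≤ Θ ∧ tilt U = k * μ := by
    rcases k.eq_zero_or_pos with rfl | hk
    · rw [Nat.cast_zero, zero_mul] at h
      exact ⟨0, le_rfl, hΘ₀.le, by rw [Nat.cast_zero, zero_mul]; exact h.antisymm (tilt_nonneg U)⟩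
    · have hk' : (0 : ℝ) < k := by exact_mod_cast hk
      exact ⟨tilt U / k, div_nonneg (tilt_nonneg U) hk'.le,
        (div_le_iff₀ hk').2 (by linarith), by field_simp⟩
  obtain ⟨α, α', hUeq⟩ := exists_eq_Rot_mul_yRot_mul_Rot hU
  obtain ⟨x, γ, y, hμ⟩ := exists_yRot_eq_Rot_mul_Rot_mul_Rot hΘ₀ hΘ hμ₀ hμΘ
  obtain ⟨β, hβ⟩ :=
    exists_alternatingProd_eq_mul_pow_mul Rot_zero_zero_add (Rot (-Θ) 0) γ x y k α α'
  rw [hkμ, yRot_nat_mul, hμ, hβ] at hUeq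
  exact ⟨β, fun _ => γ, hUeq⟩

lemma Rot_toIcoMod (θ ψ φ : ℝ) :
    Rot θ ψ (toIcoMod (by positivity : (0 : ℝ) < 4 * π) 0 φ) = Rot θ ψ φ :=
  (Rot_periodic θ ψ).sub_zsmul_eq _

theorem stmt12_general (Θ : ℝ) (hΘ : Θ ∈ Set.Ioc 0 (π/2)) (l : ℕ)
    (θ ψ φ : ℝ) :
    (∃ β γ : ℕ → ℝ,
      (∀ i < l, β i ∈ Set.Ico 0 (4*π)) ∧
      (∀ i, 1 ≤ i → i ≤ l - 1 → γ i ∈ Set.Ico 0 (4*π)) ∧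
      Rot θ ψ φ =
        Rot Θ 0 (β 0) *
          ((List.range (l - 1)).map (fun i => Rot 0 0 (γ (i+1)) * Rot Θ 0 (β (i+1)))).prod) ↔
    |delta2 θ ψ φ Θ| ≤ (l - 1 : ℕ) * Θ := by
  obtain ⟨hΘ₀, hΘ⟩ := hΘ
  have hconj (β γ : ℕ → ℝ) : yConj (Θ / 2) (alternatingProd (Rot Θ 0) (Rot 0 0) (l - 1) β γ) =
      alternatingProd (Rot 0 0) (Rot (-Θ) 0) (l - 1) β γ := by
    simp only [map_alternatingProd, Function.comp_def, yConj_Rot_zero, sub_self, zero_sub]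
  rw [← tilt_yConj_Rot]
  constructor
  · rintro ⟨β, γ, -, -, h⟩
    have htilt := tilt_alternatingProd_le hΘ₀.le hΘ (l - 1) β γ
    rw [← hconj] at htilt
    rwa [h]
  · intro h
    obtain ⟨β, γ, hβγ⟩ := exists_alternatingProd_eq hΘ₀ hΘ (yConj_mem _ (Rot_mem θ ψ φ)) h
    refine ⟨fun i => toIcoMod (by positivity) 0 (β i), fun i => toIcoMod (by positivity) 0 (γ i),
      fun i _ => toIcoMod_mem_Ico' _ _, fun i _ _ => toIcoMod_mem_Ico' _ _, ?_⟩
    simp only [Rot_toIcoMod]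
    apply (yConj (Θ / 2)).injective
    rw [hβγ, ← hconj]
    rfl

theorem stmt12 (Θ : ℝ) (hΘ : Θ ∈ Set.Ioc 0 (π/2)) (l : ℕ) (hl : 1 ≤ l)
    (θ ψ φ : ℝ) (hθ : θ ∈ Set.Ico 0 π) (hψ : ψ ∈ Set.Ico 0 π) (hφ : φ ∈ Set.Ico 0 (4*π)) :
    (∃ β γ : ℕ → ℝ,
      (∀ i < l, β i ∈ Set.Ico 0 (4*π)) ∧
      (∀ i, 1 ≤ i → i ≤ l - 1 → γ i ∈ Set.Ico 0 (4*π)) ∧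
      Rot θ ψ φ =
        Rot Θ 0 (β 0) *
          ((List.range (l - 1)).map (fun i => Rot 0 0 (γ (i+1)) * Rot Θ 0 (β (i+1)))).prod) ↔
    |delta2 θ ψ φ Θ| ≤ (l - 1 : ℕ) * Θ :=
  stmt12_general Θ hΘ l θ ψ φ
end
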